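/- For every A ⊆ E: r'(A ∪ {γ}) = r(A) if A contains no OX-circuit of M but A ∪ {e} contains an OX-circuit of M; r'(A ∪ {γ}) = r(A) + 2 if A contains an OX-circuit of M and e ∉ cl(A); and r'(A ∪ {γ}) = r(A) + 1 otherwise. -/

import Mathlib

open Set

namespace ESSplit

variable {α : Type*}

/-- A circuit of a matroid: a minimal dependent set. -/
def IsCircuit (M : Matroid α) (C : Set α) : Prop :=
  M.Dep C ∧ ∀ D, D ⊂ C → M.Indep D

/-- A binary matroid: one representable over GF(2). -/
def IsBinary (M : Matroid α) : Prop :=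
  ∃ (n : ℕ) (φ : α → (Fin n → ZMod 2)),
    ∀ I, I ⊆ M.E → (M.Indep I ↔ LinearIndependent (ZMod 2) (fun x : I => φ x.1))

/-- An OX-circuit: a circuit meeting `X` in an odd number of elements. -/
def IsOX (M : Matroid α) (X C : Set α) : Prop :=
  IsCircuit M C ∧ Odd (C ∩ X).ncard

/-- An EX-circuit: a circuit meeting `X` in an even number of elements. -/
def IsEX (M : Matroid α) (X C : Set α) : Prop :=
  IsCircuit M C ∧ Even (C ∩ X).ncard

/-- `D` is a union of two disjoint OX-circuits containing no EX-circuit. -/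
def OXUnion (M : Matroid α) (X D : Set α) : Prop :=
  ∃ C₁ C₂, IsOX M X C₁ ∧ IsOX M X C₂ ∧ Disjoint C₁ C₂ ∧ D = C₁ ∪ C₂ ∧
    ¬ ∃ C₀, IsEX M X C₀ ∧ C₀ ⊆ D

/-- The description of the circuits of the es-splitting matroid `M_X^e`. -/
def ESCircuit (M : Matroid α) (X : Set α) (e a γ : α) (C : Set α) : Prop :=
  C = {e, a, γ} ∨
  IsEX M X C ∨
  (OXUnion M X C ∧ ∀ D, OXUnion M X D → D ⊆ C → D = C) ∨
  (∃ C₀, IsOX M X C₀ ∧ C = C₀ ∪ {a}) ∨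
  (∃ C₀, IsOX M X C₀ ∧ e ∉ C₀ ∧ C = C₀ ∪ {e, γ}) ∨
  (∃ C₀, IsOX M X C₀ ∧ e ∈ C₀ ∧ C = (C₀ \ {e}) ∪ {γ}) ∨
  (∃ C₀, IsCircuit M C₀ ∧ e ∈ C₀ ∧ Odd (((C₀ \ {e}) ∩ X).ncard) ∧
      C = (C₀ \ {e}) ∪ {a, γ})

/-- `M'` is the es-splitting matroid `M_X^e` of `M` (with new elements `a`, `γ`):
it has ground set `M.E ∪ {a, γ}` and its circuits are exactly as described. -/
def IsESSplit (M M' : Matroid α) (X : Set α) (e a γ : α) : Prop :=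
  M'.E = M.E ∪ {a, γ} ∧ ∀ C, IsCircuit M' C ↔ ESCircuit M X e a γ C

/-- The set `T(A)`. -/
def T (M : Matroid α) (X : Set α) (e : α) (A : Set α) : Set α :=
  {x | x ∈ M.E \ A ∧ x ≠ e ∧ ∃ C, IsOX M X C ∧ x ∈ C ∧ e ∈ C ∧ C ⊆ A ∪ {e, x}}

/-- The set `F(A)`. -/
def F (M : Matroid α) (X A : Set α) : Set α :=
  {x | x ∈ M.closure A \ A ∧ ∃ C, IsOX M X C ∧ x ∈ C ∧ C ⊆ M.closure A}

/-- The rank of a set `A` in a (finite) matroid: the maximum size of an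
independent subset of `A`. -/
noncomputable def rk (M : Matroid α) (A : Set α) : ℕ :=
  sSup {n | ∃ I, M.Indep I ∧ I ⊆ A ∧ I.ncard = n}

end ESSplit

/-!
For `A ⊆ E`, an `M'`-independent subset of `A` contains at most one circuit of `M`, and that
circuit is an OX-circuit: EX-circuits are circuits of `M'`, and in a binary matroid two distinct
OX-circuits produce, through symmetric differences of GF(2)-cycles, two disjoint OX-circuits whose
minimal union is a circuit of `M'`. Hence `r'(A) = r(A) + 1` if `A` contains an OX-circuit and
`r'(A) = r(A)` otherwise. Adding `γ` raises `r'` by one unless `γ ∈ cl'(A)`, and the circuits of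
`M'` through `γ` show that this happens exactly when `A ∪ {e}` contains an OX-circuit and
`e ∈ cl(A)`. The three cases of the theorem are read off from these two facts.
-/

open Matroid
open scoped symmDiff

section

variable {α : Type*}

lemma Set.Finite.exists_subset_minimal {P : Set α → Prop} {S : Set α} (hS : S.Finite)
    (hP : P S) : ∃ T ⊆ S, Minimal P T := by
  obtain ⟨T, hTS, hT⟩ := (hS.finite_subsets.subset fun _ h ↦ h.2 :
    {T | P T ∧ T ⊆ S}.Finite).exists_le_minimal ⟨hP, subset_rfl⟩
  exact ⟨T, hTS, hT.1.1, fun U hU hUT ↦ hT.2 ⟨hU, hUT.trans hTS⟩ hUT⟩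

lemma finsum_mem_symmDiff {V : Type*} [AddCommGroup V] [Module (ZMod 2) V] (f : α → V)
    {s t : Set α} (hs : s.Finite) (ht : t.Finite) :
    ∑ᶠ x ∈ s ∆ t, f x = ∑ᶠ x ∈ s, f x + ∑ᶠ x ∈ t, f x := by
  have hself : ∑ᶠ x ∈ s ∩ t, f x + ∑ᶠ x ∈ s ∩ t, f x = 0 := by
    rw [← two_smul (ZMod 2), show (2 : ZMod 2) = 0 from rfl, zero_smul]
  rw [← finsum_mem_inter_add_sdiff t hs, ← finsum_mem_inter_add_sdiff s ht, inter_comm t s,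
    Set.symmDiff_def, finsum_mem_union disjoint_sdiff_sdiff hs.sdiff ht.sdiff,
    add_add_add_comm, hself, zero_add]

lemma Set.odd_ncard_symmDiff_inter_iff {s t : Set α} (X : Set α) (hs : s.Finite)
    (ht : t.Finite) :
    Odd ((s ∆ t) ∩ X).ncard ↔ (Odd (s ∩ X).ncard ↔ ¬ Odd (t ∩ X).ncard) := by
  set u := s ∩ X
  set v := t ∩ X
  have hu : u.Finite := hs.inter_of_left X
  have hv : v.Finite := ht.inter_of_left X
  have huv : u ∩ v ⊆ u ∪ v := inter_subset_left.trans subset_union_left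
  have hcard : ((s ∆ t) ∩ X).ncard + 2 * (u ∩ v).ncard = u.ncard + v.ncard := by
    have h₁ := ncard_union_add_ncard_inter u v hu hv
    have h₂ := ncard_le_ncard huv (hu.union hv)
    have hX : (s ∆ t) ∩ X = (u ∪ v) \ (u ∩ v) := by
      ext; simp only [u, v, Set.mem_symmDiff, mem_inter_iff, mem_union, mem_sdiff]; tauto
    rw [hX, ncard_sdiff huv (hu.inter_of_left v)]
    omega
  have hodd : Odd ((s ∆ t) ∩ X).ncard ↔ Odd (u.ncard + v.ncard) := by
    rw [← hcard]; simp [parity_simps]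
  rw [hodd, Nat.odd_add, Nat.not_odd_iff_even]

namespace Matroid

variable {N : Matroid α} {A C : Set α} {x : α}

lemma eRk_insert_of_mem_closure (hx : x ∈ N.closure A) : N.eRk (insert x A) = N.eRk A := by
  rw [← eRk_insert_closure_eq, insert_eq_of_mem hx, eRk_closure_eq]

lemma IsCircuit.mem_closure_of_subset_insert (hC : N.IsCircuit C) (hxC : x ∈ C)
    (hCA : C ⊆ insert x A) : x ∈ N.closure A :=
  N.closure_subset_closure (sdiff_singleton_subset_iff.2 hCA)
    (hC.mem_closure_sdiff_singleton_of_mem hxC)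

end Matroid

end

namespace ESSplit

variable {α : Type*}

section Circuits

variable {M : Matroid α} {X C : Set α}

lemma isCircuit_iff_isCircuit : IsCircuit M C ↔ M.IsCircuit C :=
  isCircuit_iff_forall_ssubset.symm

lemma natCast_rk (hfin : M.E.Finite) (A : Set α) : (rk M A : ℕ∞) = M.eRk A := by
  obtain ⟨I, hI⟩ := M.exists_isBasis' A
  have hIfin : I.Finite := hfin.subset hI.indep.subset_ground
  have hrk : rk M A = I.ncard := by
    refine IsGreatest.csSup_eq ⟨⟨I, hI.indep, hI.subset, rfl⟩, ?_⟩
    rintro _ ⟨J, hJ, hJA, rfl⟩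
    have hle := hJ.encard_le_eRk_of_subset hJA
    rw [← hI.encard_eq_eRk, ← (hfin.subset hJ.subset_ground).cast_ncard_eq,
      ← hIfin.cast_ncard_eq] at hle
    exact_mod_cast hle
  rw [hrk, hIfin.cast_ncard_eq, hI.encard_eq_eRk]

lemma isOX_iff : IsOX M X C ↔ M.IsCircuit C ∧ Odd (C ∩ X).ncard := by
  rw [IsOX, isCircuit_iff_isCircuit]

lemma isEX_iff : IsEX M X C ↔ M.IsCircuit C ∧ Even (C ∩ X).ncard := by
  rw [IsEX, isCircuit_iff_isCircuit]

lemma IsOX.isCircuit (h : IsOX M X C) : M.IsCircuit C := (isOX_iff.1 h).1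

end Circuits

section Binary

variable {V : Type*} [AddCommGroup V] [Module (ZMod 2) V]

def IsBinaryRep (M : Matroid α) (φ : α → V) : Prop :=
  ∀ I ⊆ M.E, M.Indep I ↔ LinearIndepOn (ZMod 2) φ I

variable {M : Matroid α} {φ : α → V} {X C D S : Set α}

lemma IsBinaryRep.dep_of_finsum_mem_eq_zero (hφ : IsBinaryRep M φ) (hS : S ⊆ M.E)
    (hSfin : S.Finite) (hne : S.Nonempty) (h0 : ∑ᶠ x ∈ S, φ x = 0) : M.Dep S := by
  refine ⟨fun hI ↦ ?_, hS⟩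
  obtain ⟨x, hx⟩ := hne
  refine one_ne_zero <| linearIndepOn_iff'.1 ((hφ S hS).1 hI) hSfin.toFinset 1 (by simp) ?_ x
    (by simpa using hx)
  simpa [← finsum_mem_eq_finite_toFinset_sum φ hSfin] using h0

lemma IsBinaryRep.finsum_mem_eq_zero (hφ : IsBinaryRep M φ) (hC : M.IsCircuit C) :
    ∑ᶠ x ∈ C, φ x = 0 := by
  classical
  have hdep : ¬ LinearIndepOn (ZMod 2) φ C := fun h ↦ hC.not_indep ((hφ C hC.subset_ground).2 h)
  simp only [linearIndepOn_iff', not_forall] at hdep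
  obtain ⟨t, g, htC, hsum, x, hxt, hgx⟩ := hdep
  -- Over `GF(2)` the relation `g` is the indicator of its support, which is then all of `C`.
  set S := t.filter (g · ≠ 0)
  have hS0 : ∑ i ∈ S, φ i = 0 := by
    rw [← hsum, Finset.sum_filter]
    refine Finset.sum_congr rfl fun i _ ↦ ?_
    obtain hgi | hgi : g i = 0 ∨ g i = 1 := by generalize g i = b; revert b; decide
    all_goals simp [hgi]
  have hSC : (S : Set α) = C := by
    have hSC : (S : Set α) ⊆ C := (Finset.coe_subset.2 (Finset.filter_subset _ _)).trans htC
    refine hC.eq_of_dep_subset (hφ.dep_of_finsum_mem_eq_zero (hSC.trans hC.subset_ground)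
      S.finite_toSet ⟨x, by simpa [S] using ⟨hxt, hgx⟩⟩ (by rwa [finsum_mem_coe_finset])) hSC
  rw [← hSC, finsum_mem_coe_finset, hS0]

lemma IsBinaryRep.exists_isOX_subset (hφ : IsBinaryRep M φ) (hfin : M.E.Finite) (hS : S ⊆ M.E)
    (h0 : ∑ᶠ x ∈ S, φ x = 0) (hodd : Odd (S ∩ X).ncard) : ∃ C ⊆ S, IsOX M X C := by
  obtain ⟨T, hTS, ⟨hT0, hTodd⟩, hTmin⟩ :=
    (hfin.subset hS).exists_subset_minimal (P := fun T ↦ ∑ᶠ x ∈ T, φ x = 0 ∧ Odd (T ∩ X).ncard)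
      ⟨h0, hodd⟩
  have hTfin : T.Finite := hfin.subset (hTS.trans hS)
  have hTne : T.Nonempty := (nonempty_of_ncard_ne_zero hTodd.pos.ne').mono inter_subset_left
  obtain ⟨C, hCT, hC⟩ :=
    (hφ.dep_of_finsum_mem_eq_zero (hTS.trans hS) hTfin hTne hT0).exists_isCircuit_subset
  have hCfin : C.Finite := hTfin.subset hCT
  refine ⟨C, hCT.trans hTS, isOX_iff.2 ⟨hC, by_contra fun hCodd ↦ ?_⟩⟩
  -- Otherwise `T \ C = T ∆ C` would be a smaller odd cycle.
  have hTC : T ∆ C = T \ C := symmDiff_of_ge hCT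
  have hsmaller := hTmin (y := T ∆ C)
    ⟨by rw [finsum_mem_symmDiff φ hTfin hCfin, hT0, hφ.finsum_mem_eq_zero hC, add_zero],
      (Set.odd_ncard_symmDiff_inter_iff X hTfin hCfin).2 (iff_of_true hTodd hCodd)⟩
    (hTC ▸ sdiff_subset)
  obtain ⟨c, hc⟩ := hC.nonempty
  exact (hTC ▸ hsmaller (hCT hc)).2 hc

lemma IsBinaryRep.exists_disjoint_isOX (hφ : IsBinaryRep M φ) (hfin : M.E.Finite)
    (hC : M.IsCircuit C) (hD : M.IsCircuit D) (hCD : C ≠ D)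
    (hodd : ∀ C' ⊆ C ∪ D, M.IsCircuit C' → Odd (C' ∩ X).ncard) :
    ∃ C₁ C₂, IsOX M X C₁ ∧ IsOX M X C₂ ∧ Disjoint C₁ C₂ ∧ C₁ ∪ C₂ ⊆ C ∪ D := by
  have hCfin := hfin.subset hC.subset_ground
  have hDfin := hfin.subset hD.subset_ground
  have hΔ : C ∆ D ⊆ C ∪ D := symmDiff_le_sup
  have hΔE : C ∆ D ⊆ M.E := hΔ.trans (union_subset hC.subset_ground hD.subset_ground)
  have hΔfin : (C ∆ D).Finite := hCfin.union hDfin |>.subset hΔ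
  have hΔ0 : ∑ᶠ x ∈ C ∆ D, φ x = 0 := by
    rw [finsum_mem_symmDiff φ hCfin hDfin, hφ.finsum_mem_eq_zero hC, hφ.finsum_mem_eq_zero hD,
      add_zero]
  have hΔne : (C ∆ D).Nonempty := by
    rwa [nonempty_iff_ne_empty, Ne, ← bot_eq_empty, symmDiff_eq_bot]
  obtain ⟨C₁, hC₁Δ, hC₁⟩ :=
    (hφ.dep_of_finsum_mem_eq_zero hΔE hΔfin hΔne hΔ0).exists_isCircuit_subset
  have hC₁odd := hodd C₁ (hC₁Δ.trans hΔ) hC₁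
  have hC₁fin := hΔfin.subset hC₁Δ
  -- `C ∆ D` meets `X` evenly, so removing the odd circuit `C₁` leaves an odd cycle.
  obtain ⟨C₂, hC₂, hC₂X⟩ := hφ.exists_isOX_subset (S := (C ∆ D) ∆ C₁) (X := X) hfin
    ((symmDiff_of_ge hC₁Δ).symm ▸ sdiff_subset.trans hΔE)
    (by rw [finsum_mem_symmDiff φ hΔfin hC₁fin, hΔ0, hφ.finsum_mem_eq_zero hC₁, add_zero])
    (by
      rw [odd_ncard_symmDiff_inter_iff X hΔfin hC₁fin, odd_ncard_symmDiff_inter_iff X hCfin hDfin]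
      have := hodd C subset_union_left hC
      have := hodd D subset_union_right hD
      tauto)
  rw [symmDiff_of_ge hC₁Δ] at hC₂
  refine ⟨C₁, C₂, isOX_iff.2 ⟨hC₁, hC₁odd⟩, hC₂X, ?_, union_subset (hC₁Δ.trans hΔ)
    (hC₂.trans (sdiff_subset.trans hΔ))⟩
  exact disjoint_of_subset_right hC₂ disjoint_sdiff_right

end Binary

namespace IsESSplit

variable {M M' : Matroid α} {X : Set α} {e a γ : α} {A C S : Set α}

lemma isCircuit_iff (hs : IsESSplit M M' X e a γ) : M'.IsCircuit C ↔ ESCircuit M X e a γ C := by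
  rw [← isCircuit_iff_isCircuit]
  exact hs.2 C

lemma subset_ground (hs : IsESSplit M M' X e a γ) (hS : S ⊆ M.E) : S ⊆ M'.E :=
  hs.1 ▸ hS.trans subset_union_left

lemma gamma_mem_ground (hs : IsESSplit M M' X e a γ) : γ ∈ M'.E :=
  hs.1 ▸ Or.inr (Or.inr rfl)

lemma ground_finite (hs : IsESSplit M M' X e a γ) (hfin : M.E.Finite) : M'.E.Finite :=
  hs.1 ▸ hfin.union (toFinite _)

lemma isCircuit_of_isEX (hs : IsESSplit M M' X e a γ) (hC : IsEX M X C) : M'.IsCircuit C :=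
  hs.isCircuit_iff.2 <| .inr <| .inl hC

lemma isCircuit_of_minimal_oxUnion (hs : IsESSplit M M' X e a γ) (hC : Minimal (OXUnion M X) C) :
    M'.IsCircuit C :=
  hs.isCircuit_iff.2 <| .inr <| .inr <| .inl ⟨hC.1, fun _ hD hDC ↦ hC.eq_of_subset hD hDC⟩

lemma isCircuit_union_pair (hs : IsESSplit M M' X e a γ) (hC : IsOX M X C) (heC : e ∉ C) :
    M'.IsCircuit (C ∪ {e, γ}) :=
  hs.isCircuit_iff.2 <| .inr <| .inr <| .inr <| .inr <| .inl ⟨C, hC, heC, rfl⟩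

lemma isCircuit_sdiff_union_gamma (hs : IsESSplit M M' X e a γ) (hC : IsOX M X C) (heC : e ∈ C) :
    M'.IsCircuit (C \ {e} ∪ {γ}) :=
  hs.isCircuit_iff.2 <| .inr <| .inr <| .inr <| .inr <| .inr <| .inl ⟨C, hC, heC, rfl⟩

lemma isEX_or_oxUnion_of_isCircuit (hs : IsESSplit M M' X e a γ) (haE : a ∉ M.E) (hγE : γ ∉ M.E)
    (hC : M'.IsCircuit C) (hCE : C ⊆ M.E) : IsEX M X C ∨ OXUnion M X C := by
  rcases hs.isCircuit_iff.1 hC with rfl | h | h | ⟨_, -, rfl⟩ | ⟨_, -, -, rfl⟩ | ⟨_, -, -, rfl⟩ |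
    ⟨_, -, -, -, rfl⟩
  · exact absurd (hCE (show a ∈ _ by simp)) haE
  · exact .inl h
  · exact .inr h.1
  · exact absurd (hCE (show a ∈ _ by simp)) haE
  · exact absurd (hCE (show γ ∈ _ by simp)) hγE
  · exact absurd (hCE (show γ ∈ _ by simp)) hγE
  · exact absurd (hCE (show a ∈ _ by simp)) haE

lemma exists_isOX_of_gamma_mem (hs : IsESSplit M M' X e a γ) (haE : a ∉ M.E) (hγE : γ ∉ M.E)
    (haγ : a ≠ γ) (hC : M'.IsCircuit C) (hCE : C ⊆ insert γ M.E) (hγC : γ ∈ C) :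
    ∃ C₀, IsOX M X C₀ ∧ (e ∉ C₀ ∧ C = C₀ ∪ {e, γ} ∨ e ∈ C₀ ∧ C = C₀ \ {e} ∪ {γ}) := by
  have haC : a ∉ C := fun haC ↦ (hCE haC).elim haγ haE
  rcases hs.isCircuit_iff.1 hC with rfl | h | ⟨⟨C₁, C₂, h₁, h₂, -, rfl, -⟩, -⟩ | ⟨_, -, rfl⟩ |
    h | h | ⟨_, -, -, -, rfl⟩
  · exact absurd (by simp) haC
  · exact absurd ((isEX_iff.1 h).1.subset_ground hγC) hγE
  · exact (hγC.elim (fun h ↦ hγE (h₁.isCircuit.subset_ground h))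
      fun h ↦ hγE (h₂.isCircuit.subset_ground h)).elim
  · exact absurd (by simp) haC
  · obtain ⟨C₀, hC₀, he, rfl⟩ := h
    exact ⟨C₀, hC₀, .inl ⟨he, rfl⟩⟩
  · obtain ⟨C₀, hC₀, he, rfl⟩ := h
    exact ⟨C₀, hC₀, .inr ⟨he, rfl⟩⟩
  · exact absurd (by simp) haC

variable {V : Type*} [AddCommGroup V] [Module (ZMod 2) V] {φ : α → V}

lemma indep_iff (hs : IsESSplit M M' X e a γ) (haE : a ∉ M.E) (hγE : γ ∉ M.E)
    (hφ : IsBinaryRep M φ) (hfin : M.E.Finite) (hS : S ⊆ M.E) :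
    M'.Indep S ↔ ∀ C ⊆ S, ∀ D ⊆ S, M.IsCircuit C → M.IsCircuit D → C = D ∧ Odd (C ∩ X).ncard := by
  rw [indep_iff_forall_subset_not_isCircuit (hs.subset_ground hS)]
  refine ⟨fun h C hCS D hDS hC hD ↦ ?_, fun h C hCS hC ↦ ?_⟩
  · have hodd : ∀ C' ⊆ S, M.IsCircuit C' → Odd (C' ∩ X).ncard := fun C' hC'S hC' ↦
      Nat.not_even_iff_odd.1 fun hev ↦ h C' hC'S (hs.isCircuit_of_isEX (isEX_iff.2 ⟨hC', hev⟩))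
    refine ⟨by_contra fun hCD ↦ ?_, hodd C hCS hC⟩
    have hCDS := union_subset hCS hDS
    obtain ⟨C₁, C₂, h₁, h₂, hdisj, hsub⟩ :=
      hφ.exists_disjoint_isOX hfin hC hD hCD fun C' hC' ↦ hodd C' (hC'.trans hCDS)
    have hU : OXUnion M X (C₁ ∪ C₂) := ⟨C₁, C₂, h₁, h₂, hdisj, rfl, fun ⟨C₀, hC₀, hC₀U⟩ ↦
      Nat.not_odd_iff_even.2 (isEX_iff.1 hC₀).2
        (hodd C₀ (hC₀U.trans (hsub.trans hCDS)) (isEX_iff.1 hC₀).1)⟩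
    obtain ⟨T, hTU, hT⟩ := (hfin.subset (hsub.trans (hCDS.trans hS))).exists_subset_minimal hU
    exact h T (hTU.trans (hsub.trans hCDS)) (hs.isCircuit_of_minimal_oxUnion hT)
  · obtain hEX | ⟨C₁, C₂, h₁, h₂, hdisj, rfl, -⟩ :=
      hs.isEX_or_oxUnion_of_isCircuit haE hγE hC (hCS.trans hS)
    · obtain ⟨hC, hev⟩ := isEX_iff.1 hEX
      exact Nat.not_odd_iff_even.2 hev (h C hCS C hCS hC hC).2
    · obtain ⟨rfl, -⟩ := h C₁ (subset_union_left.trans hCS) C₂ (subset_union_right.trans hCS)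
        h₁.isCircuit h₂.isCircuit
      exact h₁.isCircuit.nonempty.ne_empty (disjoint_self.1 hdisj)

lemma eRk_eq_of_not_exists_isOX (hs : IsESSplit M M' X e a γ) (haE : a ∉ M.E) (hγE : γ ∉ M.E)
    (hφ : IsBinaryRep M φ) (hfin : M.E.Finite) (hA : A ⊆ M.E)
    (hP : ¬ ∃ C, IsOX M X C ∧ C ⊆ A) : M'.eRk A = M.eRk A := by
  suffices M' ↾ A = M ↾ A by rw [← eRank_restrict, this, eRank_restrict]
  refine ext_indep rfl fun I hIA ↦ ?_
  rw [restrict_ground_eq] at hIA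
  rw [restrict_indep_iff, restrict_indep_iff, hs.indep_iff haE hγE hφ hfin (hIA.trans hA),
    indep_iff_forall_subset_not_isCircuit (hIA.trans hA)]
  refine and_congr_left fun _ ↦ ⟨fun h C hCI hC ↦ ?_, fun h C hCI _ _ hC ↦ (h C hCI hC).elim⟩
  exact hP ⟨C, isOX_iff.2 ⟨hC, (h C hCI C hCI hC hC).2⟩, hCI.trans hIA⟩

lemma eRk_eq_add_one_of_isOX (hs : IsESSplit M M' X e a γ) (haE : a ∉ M.E) (hγE : γ ∉ M.E)
    (hφ : IsBinaryRep M φ) (hfin : M.E.Finite) (hA : A ⊆ M.E) (hP : ∃ C, IsOX M X C ∧ C ⊆ A) :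
    M'.eRk A = M.eRk A + 1 := by
  obtain ⟨C, hC, hCA⟩ := hP
  refine le_antisymm (eRk_le_iff.2 fun J hJA hJ ↦ ?_) ?_
  · rw [hs.indep_iff haE hγE hφ hfin (hJA.trans hA)] at hJ
    by_cases hJi : M.Indep J
    · exact (hJi.encard_le_eRk_of_subset hJA).trans le_self_add
    -- `J` contains a unique circuit `D`, so deleting one element of `D` leaves an independent set.
    obtain ⟨D, hDJ, hD⟩ := ((not_indep_iff (hJA.trans hA)).1 hJi).exists_isCircuit_subset
    obtain ⟨d, hd⟩ := hD.nonempty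
    have hJd : M.Indep (J \ {d}) := by
      refine (indep_iff_forall_subset_not_isCircuit (sdiff_subset.trans (hJA.trans hA))).2
        fun D' hD'J hD' ↦ ?_
      obtain ⟨rfl, -⟩ := hJ D' (hD'J.trans sdiff_subset) D hDJ hD' hD
      exact (hD'J hd).2 rfl
    rw [← encard_sdiff_singleton_add_one (hDJ hd)]
    gcongr
    exact hJd.encard_le_eRk_of_subset (sdiff_subset.trans hJA)
  obtain ⟨c, hc⟩ := hC.isCircuit.nonempty
  obtain ⟨I, hI, hCI⟩ := (hC.isCircuit.sdiff_singleton_indep hc).subset_isBasis_of_subset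
    (sdiff_subset.trans hCA) hA
  have hCcI : C ⊆ insert c I := sdiff_singleton_subset_iff.1 hCI
  have hcI : c ∉ I := fun hcI ↦ hC.isCircuit.not_indep (hI.indep.subset
    (hCcI.trans (insert_subset hcI subset_rfl)))
  have hind : M'.Indep (insert c I) := by
    rw [hs.indep_iff haE hγE hφ hfin ((insert_subset (hCA hc) hI.subset).trans hA)]
    have hfund : ∀ D ⊆ insert c I, M.IsCircuit D → D = C := fun D hD hD' ↦
      (hD'.eq_fundCircuit_of_subset hI.indep hD).trans
        (hC.isCircuit.eq_fundCircuit_of_subset hI.indep hCcI).symm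
    intro D₁ hD₁ D₂ hD₂ h₁ h₂
    rw [hfund D₁ hD₁ h₁, hfund D₂ hD₂ h₂]
    exact ⟨rfl, (isOX_iff.1 hC).2⟩
  calc M.eRk A + 1 = (insert c I).encard := by rw [encard_insert_of_notMem hcI, hI.encard_eq_eRk]
    _ ≤ M'.eRk A := hind.encard_le_eRk_of_subset (insert_subset (hCA hc) hI.subset)

lemma gamma_mem_closure_iff (hs : IsESSplit M M' X e a γ) (haE : a ∉ M.E) (hγE : γ ∉ M.E)
    (haγ : a ≠ γ) (heE : e ∈ M.E) (hA : A ⊆ M.E) :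
    γ ∈ M'.closure A ↔ (∃ C, IsOX M X C ∧ C ⊆ insert e A) ∧ e ∈ M.closure A := by
  have hγA : γ ∉ A := fun h ↦ hγE (hA h)
  have heγ : e ≠ γ := fun h ↦ hγE (h ▸ heE)
  refine ⟨fun hγ ↦ ?_, fun ⟨⟨C, hC, hCA⟩, he⟩ ↦ ?_⟩
  · obtain ⟨C', hC'A, hC', hγC'⟩ := (mem_closure_iff_exists_isCircuit hγA).1 hγ
    obtain ⟨C, hC, ⟨heC, rfl⟩ | ⟨heC, rfl⟩⟩ := hs.exists_isOX_of_gamma_mem haE hγE haγ hC'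
      (hC'A.trans (insert_subset_insert hA)) hγC'
    · have hCA : C ⊆ A := fun x hx ↦ (hC'A (Or.inl hx)).resolve_left
        fun h ↦ hγE (h ▸ hC.isCircuit.subset_ground hx)
      have heA : e ∈ A := (hC'A (Or.inr (Or.inl rfl))).resolve_left heγ
      exact ⟨⟨C, hC, hCA.trans (subset_insert _ _)⟩, M.mem_closure_of_mem' heA⟩
    · have hCA : C \ {e} ⊆ A := fun x hx ↦ (hC'A (Or.inl hx)).resolve_left
        fun h ↦ hγE (h ▸ hC.isCircuit.subset_ground hx.1)
      exact ⟨⟨C, hC, sdiff_singleton_subset_iff.1 hCA⟩,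
        hC.isCircuit.mem_closure_of_subset_insert heC (sdiff_singleton_subset_iff.1 hCA)⟩
  by_cases heC : e ∈ C
  · refine (hs.isCircuit_sdiff_union_gamma hC heC).mem_closure_of_subset_insert (by simp) ?_
    rw [union_singleton]
    exact insert_subset_insert (sdiff_singleton_subset_iff.2 hCA)
  -- `C ∪ {e, γ}` puts `γ` in the closure of `A ∪ {e}`, so it suffices to span `e` from `A`.
  have hγe : γ ∈ M'.closure (insert e A) := by
    refine (hs.isCircuit_union_pair hC heC).mem_closure_of_subset_insert (by simp) ?_
    rw [union_subset_iff]
    exact ⟨((subset_insert_iff_of_notMem heC).1 hCA).trans ((subset_insert _ _).trans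
      (subset_insert _ _)), by simp [insert_subset_iff]⟩
  by_cases heA : e ∈ A
  · rwa [insert_eq_of_mem heA] at hγe
  obtain ⟨D, hDA, hD, heD⟩ := exists_isCircuit_of_mem_closure he heA
  by_cases hDX : Odd (D ∩ X).ncard
  · refine (hs.isCircuit_sdiff_union_gamma (isOX_iff.2 ⟨hD, hDX⟩) heD).mem_closure_of_subset_insert
      (by simp) ?_
    rw [union_singleton]
    exact insert_subset_insert (sdiff_singleton_subset_iff.2 hDA)
  have heA' : e ∈ M'.closure A := (hs.isCircuit_of_isEX (isEX_iff.2
    ⟨hD, Nat.not_odd_iff_even.1 hDX⟩)).mem_closure_of_subset_insert heD hDA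
  rwa [closure_insert_eq_of_mem_closure heA'] at hγe

end IsESSplit

end ESSplit

open ESSplit

theorem rank_union_gamma_es_splitting
    {α : Type*} (M M' : Matroid α) (X : Set α) (e a γ : α)
    (hfin : M.E.Finite) (hbin : IsBinary M)
    (hXE : X ⊆ M.E) (heX : e ∈ X) (haE : a ∉ M.E) (hγE : γ ∉ M.E) (haγ : a ≠ γ)
    (hsplit : IsESSplit M M' X e a γ)
    (A : Set α) (hAE : A ⊆ M.E) :
    (((¬ ∃ C, IsOX M X C ∧ C ⊆ A) ∧ (∃ C, IsOX M X C ∧ C ⊆ A ∪ {e})) →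
      rk M' (A ∪ {γ}) = rk M A) ∧
    (((∃ C, IsOX M X C ∧ C ⊆ A) ∧ e ∉ M.closure A) →
      rk M' (A ∪ {γ}) = rk M A + 2) ∧
    ((¬ (((¬ ∃ C, IsOX M X C ∧ C ⊆ A) ∧ (∃ C, IsOX M X C ∧ C ⊆ A ∪ {e})) ∨
        ((∃ C, IsOX M X C ∧ C ⊆ A) ∧ e ∉ M.closure A))) →
      rk M' (A ∪ {γ}) = rk M A + 1) := by
  obtain ⟨n, φ, hφ⟩ := hbin
  replace hφ : IsBinaryRep M φ := hφ
  have heE : e ∈ M.E := hXE heX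
  have hcl := hsplit.gamma_mem_closure_iff haE hγE haγ heE hAE
  have hrk (k : ℕ) (h : M'.eRk (insert γ A) = M.eRk A + k) : rk M' (insert γ A) = rk M A + k := by
    rw [← Nat.cast_inj (R := ℕ∞), Nat.cast_add, natCast_rk (hsplit.ground_finite hfin),
      natCast_rk hfin, h]
  have hrk_of_not := hsplit.eRk_eq_of_not_exists_isOX haE hγE hφ hfin hAE
  have hrk_of_isOX := hsplit.eRk_eq_add_one_of_isOX haE hγE hφ hfin hAE
  have hrk_insert : γ ∉ M'.closure A → M'.eRk (insert γ A) = M'.eRk A + 1 :=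
    fun hγ ↦ eRk_insert_eq_add_one ⟨hsplit.gamma_mem_ground, hγ⟩
  simp only [union_singleton]
  refine ⟨fun ⟨hP, C, hC, hCA⟩ ↦ hrk 0 ?_, fun ⟨⟨C, hC, hCA⟩, he⟩ ↦ hrk 2 ?_,
    fun h ↦ hrk 1 ?_⟩
  · have heC : e ∈ C := by_contra fun heC ↦ hP ⟨C, hC, (subset_insert_iff_of_notMem heC).1 hCA⟩
    rw [eRk_insert_of_mem_closure (hcl.2 ⟨⟨C, hC, hCA⟩,
      hC.isCircuit.mem_closure_of_subset_insert heC hCA⟩), hrk_of_not hP, Nat.cast_zero, add_zero]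
  · rw [hrk_insert fun hγ ↦ he (hcl.1 hγ).2, hrk_of_isOX ⟨C, hC, hCA⟩, add_assoc]; rfl
  by_cases hP : ∃ C, IsOX M X C ∧ C ⊆ A
  · obtain ⟨C, hC, hCA⟩ := hP
    have he : e ∈ M.closure A := by_contra fun he ↦ h (.inr ⟨⟨C, hC, hCA⟩, he⟩)
    rw [eRk_insert_of_mem_closure (hcl.2 ⟨⟨C, hC, hCA.trans (subset_insert _ _)⟩, he⟩),
      hrk_of_isOX ⟨C, hC, hCA⟩, Nat.cast_one]
  · have hQ : ¬ ∃ C, IsOX M X C ∧ C ⊆ insert e A := fun hQ ↦ h (.inl ⟨hP, hQ⟩)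
    rw [hrk_insert fun hγ ↦ hQ (hcl.1 hγ).1, hrk_of_not hP, Nat.cast_one]
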